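/- For fixed a, b, x > 0, the binomial distribution satisfies P( Bin(⌊an⌋, b/n) > x·ln n / ln ln n ) ≥ n^{−x + o(1)} as n → ∞; that is, ln P(Bin(⌊an⌋, b/n) > x ln n / ln ln n) / ln n → −x. -/

import Mathlib

/-!
Put `t = x log n / log log n`, let `k = ⌊t⌋ + 1` be the least integer above `t`, and let
`m = ⌊an⌋`, `p = b/n`, `c = ab`. The tail is at least its first term
`C(m,k) p^k (1-p)^(m-k) ≥ (c/(2k))^k e^(-2c)`, and by the exponential-moment bound
`P(X ≥ k) ≤ E[s^X] / s^k` with `s = k/c` it is at most `e^(k-c) (c/k)^k`.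
Hence `log P = -k log k + O(k)`. Finally `k = o(log n)` and `k log k ~ x log n`, because
`log k = log log n - log log log n + O(1)`.
-/

open Filter Topology Real
open scoped Nat

/-- `binomTail m p t` is `P(Bin(m, p) > t)`, written explicitly via the binomial distribution. -/
noncomputable def binomTail (m : ℕ) (p : ℝ) (t : ℝ) : ℝ :=
  ∑ k ∈ Finset.range (m + 1),
    if t < (k : ℝ) then (m.choose k : ℝ) * p ^ k * (1 - p) ^ (m - k) else 0

lemma binomTail_le_add_pow_div_pow {m k : ℕ} {p s t : ℝ} (hp0 : 0 ≤ p) (hp1 : p ≤ 1)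
    (hs : 1 ≤ s) (hkt : (k : ℝ) ≤ t + 1) :
    binomTail m p t ≤ (p * s + (1 - p)) ^ m / s ^ k := by
  rw [add_pow, Finset.sum_div, binomTail]
  refine Finset.sum_le_sum fun j _ => ?_
  have hq : 0 ≤ 1 - p := by linarith
  split_ifs with hj
  · have hkj : k ≤ j := by
      have : (k : ℝ) < j + 1 := by linarith
      exact Nat.lt_succ_iff.1 (by exact_mod_cast this)
    rw [le_div_iff₀ (by positivity)]
    calc (m.choose j : ℝ) * p ^ j * (1 - p) ^ (m - j) * s ^ k
        ≤ (m.choose j : ℝ) * p ^ j * (1 - p) ^ (m - j) * s ^ j := by gcongr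
      _ = (p * s) ^ j * (1 - p) ^ (m - j) * (m.choose j : ℝ) := by ring
  · positivity

lemma binomTail_le_exp_mul_div_pow {m k : ℕ} {p c t : ℝ} (hp0 : 0 ≤ p) (hp1 : p ≤ 1)
    (hc : 0 < c) (hmp : m * p ≤ c) (hck : c ≤ k) (hkt : (k : ℝ) ≤ t + 1) :
    binomTail m p t ≤ exp (k - c) * (c / k) ^ k := by
  have hs : 1 ≤ k / c := (one_le_div hc).2 hck
  have hmgf : (p * (k / c) + (1 - p)) ^ m ≤ exp (k - c) := by
    calc (p * (k / c) + (1 - p)) ^ m ≤ exp (p * (k / c - 1)) ^ m := by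
          gcongr
          linarith [add_one_le_exp (p * (k / c - 1))]
      _ = exp (m * p * (k / c - 1)) := by rw [← exp_nat_mul, mul_assoc]
      _ ≤ exp (c * (k / c - 1)) := by gcongr
      _ = exp (k - c) := by field_simp
  calc binomTail m p t ≤ (p * (k / c) + (1 - p)) ^ m / (k / c) ^ k :=
        binomTail_le_add_pow_div_pow hp0 hp1 hs hkt
    _ ≤ exp (k - c) / (k / c) ^ k := by gcongr
    _ = exp (k - c) * (c / k) ^ k := by rw [div_eq_mul_inv, ← inv_pow, inv_div]

lemma exp_neg_two_mul_le_one_sub {p : ℝ} (hp0 : 0 ≤ p) (hp : p ≤ 1 / 2) :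
    exp (-(2 * p)) ≤ 1 - p := by
  have hq : 0 < 1 - p := by linarith
  calc exp (-(2 * p)) ≤ exp (1 - (1 - p)⁻¹) := by
        gcongr
        have : (1 - p)⁻¹ ≤ 1 + 2 * p := by
          rw [inv_le_iff_one_le_mul₀ hq]
          nlinarith
        linarith
    _ ≤ exp (log (1 - p)) := exp_le_exp.2 (one_sub_inv_le_log_of_pos hq)
    _ = 1 - p := exp_log hq

lemma pow_mul_exp_le_binomTail {m k : ℕ} {p t : ℝ} (hp0 : 0 ≤ p) (hp : p ≤ 1 / 2)
    (hkm : k ≤ m) (htk : t < k) :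
    (((m : ℝ) + 1 - k) * p / k) ^ k * exp (-(2 * (m * p))) ≤ binomTail m p t := by
  have hq : 0 ≤ 1 - p := by linarith
  have hchoose : ((m : ℝ) + 1 - k) ^ k / (k : ℝ) ^ k ≤ m.choose k := by
    calc ((m : ℝ) + 1 - k) ^ k / (k : ℝ) ^ k ≤ ((m + 1 - k : ℕ) : ℝ) ^ k / k ! := by
          rw [Nat.cast_sub (by omega)]
          push_cast
          gcongr
          · exact pow_nonneg (by linarith [(Nat.cast_le (α := ℝ)).2 hkm]) k
          · exact_mod_cast Nat.factorial_le_pow k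
      _ ≤ m.choose k := Nat.pow_le_choose k m
  have hexp : exp (-(2 * p)) ^ m ≤ (1 - p) ^ (m - k) :=
    calc exp (-(2 * p)) ^ m ≤ exp (-(2 * p)) ^ (m - k) :=
          pow_le_pow_of_le_one (exp_nonneg _) (exp_le_one_iff.2 (by linarith)) (Nat.sub_le m k)
      _ ≤ (1 - p) ^ (m - k) := by gcongr; exact exp_neg_two_mul_le_one_sub hp0 hp
  have hterm : (m.choose k : ℝ) * p ^ k * (1 - p) ^ (m - k) ≤ binomTail m p t :=
    (if_pos htk).symm.trans_le <| Finset.single_le_sum (f := fun j : ℕ =>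
        if t < (j : ℝ) then (m.choose j : ℝ) * p ^ j * (1 - p) ^ (m - j) else 0)
      (fun j _ => by split_ifs <;> positivity) (Finset.mem_range.2 (Nat.lt_succ_of_le hkm))
  calc (((m : ℝ) + 1 - k) * p / k) ^ k * exp (-(2 * (m * p)))
      = ((m : ℝ) + 1 - k) ^ k / (k : ℝ) ^ k * p ^ k * exp (-(2 * p)) ^ m := by
        rw [← exp_nat_mul, div_pow, mul_pow, show (m : ℝ) * -(2 * p) = -(2 * (m * p)) by ring]
        ring
    _ ≤ m.choose k * p ^ k * (1 - p) ^ (m - k) := by gcongr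
    _ ≤ binomTail m p t := hterm

lemma log_binomTail_bounds {m k : ℕ} {p c t : ℝ} (hp0 : 0 ≤ p) (hp : p ≤ 1 / 2) (hc : 0 < c)
    (hmp : m * p ≤ c) (hcmk : c ≤ 2 * ((m + 1 - k) * p)) (hck : c ≤ k) (htk : t < k)
    (hkt : (k : ℝ) ≤ t + 1) :
    k * log (c / 2) - k * log k + -(2 * c) ≤ log (binomTail m p t) ∧
      log (binomTail m p t) ≤ k * (1 + log c) - k * log k + -c := by
  have hk : (0 : ℝ) < k := hc.trans_le hck
  have hkm : k ≤ m := by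
    have : (k : ℝ) < m + 1 := by nlinarith
    exact Nat.lt_succ_iff.1 (by exact_mod_cast this)
  have hlower : (c / 2 / k) ^ k * exp (-(2 * c)) ≤ binomTail m p t :=
    calc (c / 2 / k) ^ k * exp (-(2 * c))
        ≤ (((m : ℝ) + 1 - k) * p / k) ^ k * exp (-(2 * (m * p))) := by
          have hbase : c / 2 / k ≤ ((m : ℝ) + 1 - k) * p / k := by gcongr; linarith
          have hbase0 : 0 ≤ c / 2 / k := by positivity
          gcongr
          exact pow_nonneg (hbase0.trans hbase) k
      _ ≤ binomTail m p t := pow_mul_exp_le_binomTail hp0 hp hkm htk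
  have hpos : 0 < (c / 2 / k) ^ k * exp (-(2 * c)) := by positivity
  constructor
  · calc k * log (c / 2) - k * log k + -(2 * c) = log ((c / 2 / k) ^ k * exp (-(2 * c))) := by
          rw [log_mul (by positivity) (exp_pos _).ne', log_pow, log_div (by positivity) hk.ne',
            log_exp]
          ring
      _ ≤ log (binomTail m p t) := log_le_log hpos hlower
  · calc log (binomTail m p t) ≤ log (exp (k - c) * (c / k) ^ k) :=
          log_le_log (hpos.trans_le hlower)
            (binomTail_le_exp_mul_div_pow hp0 (by linarith) hc hmp hck hkt)
      _ = k * (1 + log c) - k * log k + -c := by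
          rw [log_mul (exp_pos _).ne' (by positivity), log_exp, log_pow, log_div hc.ne' hk.ne']
          ring

lemma eventually_log_binomTail_bounds {a b : ℝ} (ha : 0 < a) (hb : 0 < b) {t : ℕ → ℝ}
    {k : ℕ → ℕ} (hkt : ∀ᶠ n in atTop, (k n : ℝ) ∈ Set.Ioc (t n) (t n + 1))
    (hk : Tendsto (fun n => (k n : ℝ)) atTop atTop)
    (hkn : (fun n => (k n : ℝ)) =o[atTop] (fun n => (n : ℝ))) :
    ∀ᶠ n : ℕ in atTop,
      k n * log (a * b / 2) - k n * log (k n) + -(2 * (a * b)) ≤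
          log (binomTail ⌊a * n⌋₊ (b / n) (t n)) ∧
        log (binomTail ⌊a * n⌋₊ (b / n) (t n)) ≤
          k n * (1 + log (a * b)) - k n * log (k n) + -(a * b) := by
  filter_upwards [hkt, hk.eventually_ge_atTop (a * b), hkn.bound (half_pos ha),
    tendsto_natCast_atTop_atTop.eventually_ge_atTop (2 * b)] with n hktn hckn hknn hn
  have hn0 : (0 : ℝ) < n := by linarith
  rw [Real.norm_natCast, Real.norm_natCast] at hknn
  have hm := Nat.floor_le (by positivity : 0 ≤ a * n)
  have hm' := Nat.lt_floor_add_one (a * n)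
  refine log_binomTail_bounds (by positivity) ?_ (by positivity) ?_ ?_ hckn hktn.1 hktn.2
  · rw [div_le_iff₀ hn0]
    linarith
  · calc (⌊a * n⌋₊ : ℝ) * (b / n) ≤ a * n * (b / n) := by gcongr
      _ = a * b := by field_simp
  · calc a * b = 2 * (a * n / 2 * (b / n)) := by field_simp
      _ ≤ 2 * ((⌊a * n⌋₊ + 1 - k n) * (b / n)) := by gcongr; linarith

lemma tendsto_div_log_atTop : Tendsto (fun y : ℝ => y / log y) atTop atTop := by
  have h : Tendsto (fun y : ℝ => log y / y) atTop (𝓝[>] 0) :=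
    tendsto_nhdsWithin_iff.2 ⟨isLittleO_log_id_atTop.tendsto_div_nhds_zero,
      by filter_upwards [eventually_gt_atTop 1] with y hy using div_pos (log_pos hy) (by linarith)⟩
  refine h.inv_tendsto_nhdsGT_zero.congr fun y => ?_
  simp only [Pi.inv_apply, inv_div]

section

variable {α : Type*} {l : Filter α} {ℓ k : α → ℝ} {x : ℝ}

lemma tendsto_mul_div_log_atTop (hℓ : Tendsto ℓ l atTop) (hx : 0 < x) :
    Tendsto (fun a => x * ℓ a / log (ℓ a)) l atTop :=
  ((tendsto_div_log_atTop.comp hℓ).const_mul_atTop hx).congr fun _ => (mul_div_assoc ..).symm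

lemma tendsto_div_nhds_zero_of_mem_Ioc (hℓ : Tendsto ℓ l atTop) (hx : 0 < x)
    (hk : ∀ᶠ a in l, k a ∈ Set.Ioc (x * ℓ a / log (ℓ a)) (x * ℓ a / log (ℓ a) + 1)) :
    Tendsto (fun a => k a / ℓ a) l (𝓝 0) := by
  have hlogℓ : Tendsto (fun a => log (ℓ a)) l atTop := tendsto_log_atTop.comp hℓ
  have hupper : Tendsto (fun a => x * (log (ℓ a))⁻¹ + (ℓ a)⁻¹) l (𝓝 0) := by
    simpa using (hlogℓ.inv_tendsto_atTop.const_mul x).add hℓ.inv_tendsto_atTop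
  refine tendsto_of_tendsto_of_tendsto_of_le_of_le' tendsto_const_nhds hupper ?_ ?_
  · filter_upwards [hk, hℓ.eventually_gt_atTop 0, hlogℓ.eventually_gt_atTop 0]
      with a hka hℓ0 hlog0
    exact div_nonneg ((div_pos (mul_pos hx hℓ0) hlog0).trans hka.1).le hℓ0.le
  · filter_upwards [hk, hℓ.eventually_gt_atTop 0, hlogℓ.eventually_gt_atTop 0]
      with a hka hℓ0 hlog0
    rw [div_le_iff₀ hℓ0]
    calc k a ≤ x * ℓ a / log (ℓ a) + 1 := hka.2
      _ = (x * (log (ℓ a))⁻¹ + (ℓ a)⁻¹) * ℓ a := by field_simp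

lemma tendsto_log_div_log_of_mem_Ioc (hℓ : Tendsto ℓ l atTop) (hx : 0 < x)
    (hk : ∀ᶠ a in l, k a ∈ Set.Ioc (x * ℓ a / log (ℓ a)) (x * ℓ a / log (ℓ a) + 1)) :
    Tendsto (fun a => log (k a) / log (ℓ a)) l (𝓝 1) := by
  have hlogℓ : Tendsto (fun a => log (ℓ a)) l atTop := tendsto_log_atTop.comp hℓ
  have hlower :
      Tendsto (fun a => 1 + log x / log (ℓ a) - log (log (ℓ a)) / log (ℓ a)) l (𝓝 1) := by
    simpa [div_eq_mul_inv] using ((hlogℓ.inv_tendsto_atTop.const_mul (log x)).const_add 1).sub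
      ((isLittleO_log_id_atTop.tendsto_div_nhds_zero).comp hlogℓ)
  refine tendsto_of_tendsto_of_tendsto_of_le_of_le' hlower tendsto_const_nhds ?_ ?_
  · filter_upwards [hk, hℓ.eventually_gt_atTop 0, hlogℓ.eventually_gt_atTop 0]
      with a hka hℓ0 hlog0
    have ht0 : 0 < x * ℓ a / log (ℓ a) := by positivity
    rw [le_div_iff₀ hlog0]
    calc (1 + log x / log (ℓ a) - log (log (ℓ a)) / log (ℓ a)) * log (ℓ a)
        = log (x * ℓ a / log (ℓ a)) := by
          rw [log_div (by positivity) hlog0.ne', log_mul hx.ne' hℓ0.ne']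
          field_simp
          ring
      _ ≤ log (k a) := log_le_log ht0 hka.1.le
  · filter_upwards [hk, (tendsto_div_nhds_zero_of_mem_Ioc hℓ hx hk).eventually_lt_const one_pos,
      hℓ.eventually_gt_atTop 0, hlogℓ.eventually_gt_atTop 0] with a hka hkℓ hℓ0 hlog0
    rw [div_le_one hlog0]
    exact log_le_log ((div_pos (mul_pos hx hℓ0) hlog0).trans hka.1) ((div_lt_one hℓ0).1 hkℓ).le

lemma tendsto_mul_log_div_of_mem_Ioc (hℓ : Tendsto ℓ l atTop) (hx : 0 < x)
    (hk : ∀ᶠ a in l, k a ∈ Set.Ioc (x * ℓ a / log (ℓ a)) (x * ℓ a / log (ℓ a) + 1)) :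
    Tendsto (fun a => k a * log (k a) / ℓ a) l (𝓝 x) := by
  have ht := tendsto_mul_div_log_atTop hℓ hx
  have hratio : Tendsto (fun a => k a / (x * ℓ a / log (ℓ a))) l (𝓝 1) := by
    refine tendsto_of_tendsto_of_tendsto_of_le_of_le' tendsto_const_nhds
      (by simpa only [add_zero] using ht.inv_tendsto_atTop.const_add 1) ?_ ?_
    · filter_upwards [hk, ht.eventually_gt_atTop 0] with a hka ht0
      exact (one_le_div ht0).2 hka.1.le
    · filter_upwards [hk, ht.eventually_gt_atTop 0] with a hka ht0
      rw [div_le_iff₀ ht0, Pi.inv_apply, add_mul, inv_mul_cancel₀ ht0.ne', one_mul]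
      exact hka.2
  have h := (hratio.mul (tendsto_log_div_log_of_mem_Ioc hℓ hx hk)).const_mul x
  rw [mul_one, mul_one] at h
  refine h.congr' ?_
  filter_upwards [hℓ.eventually_gt_atTop 0, (tendsto_log_atTop.comp hℓ).eventually_gt_atTop 0]
    with a hℓ0 hlog0
  simp only [Function.comp_apply] at hlog0
  field_simp

lemma tendsto_mul_sub_mul_log_add_div_of_mem_Ioc (hℓ : Tendsto ℓ l atTop) (hx : 0 < x)
    (hk : ∀ᶠ a in l, k a ∈ Set.Ioc (x * ℓ a / log (ℓ a)) (x * ℓ a / log (ℓ a) + 1))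
    (A B : ℝ) :
    Tendsto (fun a => (k a * A - k a * log (k a) + B) / ℓ a) l (𝓝 (-x)) := by
  have h := (((tendsto_div_nhds_zero_of_mem_Ioc hℓ hx hk).mul_const A).sub
    (tendsto_mul_log_div_of_mem_Ioc hℓ hx hk)).add (hℓ.inv_tendsto_atTop.const_mul B)
  rw [zero_mul, zero_sub, mul_zero, add_zero] at h
  refine h.congr fun a => ?_
  simp only [Pi.inv_apply]
  ring

end

theorem stmt_10 (a b x : ℝ) (ha : 0 < a) (hb : 0 < b) (hx : 0 < x) :
    Tendsto (fun n : ℕ =>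
        Real.log (binomTail ⌊a * (n : ℝ)⌋₊ (b / n)
            (x * Real.log n / Real.log (Real.log n))) / Real.log n)
      atTop (nhds (-x)) := by
  have hL : Tendsto (fun n : ℕ => log n) atTop atTop :=
    tendsto_log_atTop.comp tendsto_natCast_atTop_atTop
  have ht := tendsto_mul_div_log_atTop hL hx
  set t := fun n : ℕ => x * log n / log (log n)
  have hkt : ∀ᶠ n in atTop, ((⌊t n⌋₊ + 1 : ℕ) : ℝ) ∈ Set.Ioc (t n) (t n + 1) := by
    filter_upwards [ht.eventually_ge_atTop 0] with n htn
    push_cast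
    exact ⟨Nat.lt_floor_add_one _, by linarith [Nat.floor_le htn]⟩
  have hk : Tendsto (fun n => ((⌊t n⌋₊ + 1 : ℕ) : ℝ)) atTop atTop :=
    tendsto_atTop_mono' _ (hkt.mono fun _ h => h.1.le) ht
  have hkn : (fun n => ((⌊t n⌋₊ + 1 : ℕ) : ℝ)) =o[atTop] (fun n : ℕ => (n : ℝ)) :=
    (Asymptotics.isLittleO_of_tendsto' ((hL.eventually_gt_atTop 0).mono fun _ h h0 =>
        absurd h0 h.ne') (tendsto_div_nhds_zero_of_mem_Ioc hL hx hkt)).trans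
      (isLittleO_log_id_atTop.comp_tendsto tendsto_natCast_atTop_atTop)
  have hbounds := eventually_log_binomTail_bounds ha hb hkt hk hkn
  refine tendsto_of_tendsto_of_tendsto_of_le_of_le'
    (tendsto_mul_sub_mul_log_add_div_of_mem_Ioc hL hx hkt (log (a * b / 2)) (-(2 * (a * b))))
    (tendsto_mul_sub_mul_log_add_div_of_mem_Ioc hL hx hkt (1 + log (a * b)) (-(a * b))) ?_ ?_
  · filter_upwards [hbounds, hL.eventually_gt_atTop 0] with n h hn
    exact div_le_div_of_nonneg_right h.1 hn.le
  · filter_upwards [hbounds, hL.eventually_gt_atTop 0] with n h hn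
    exact div_le_div_of_nonneg_right h.2 hn.le
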